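/- arXiv:math/0107050 — 3 statements merged into one kernel-verified Lean document; each statement's English description precedes it below -/
import Mathlib

section
/- Let G and H be Polish groups and f : G → H a continuous surjective group homomorphism. Then the induced map G/ker(f) → H is an isomorphism of topological groups; in particular f is an open map. -/
/-!
Pettis' argument. For a neighbourhood `V` of `1` in `G`, countably many translates of `V` cover
`G`, so by Baire's theorem `f '' V` is not meagre in `H`. It is analytic, hence has the Baire
property, and for a non-meagre set `A` with the Baire property, `A / A` is a neighbourhood of `1`.
Taking `V` with `V / V` inside a given neighbourhood of `1` shows that `f` is open.

Analytic sets have the Baire property by the Souslin-scheme argument: take Baire measurable hulls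
of the images of the cylinders of `ℕ → ℕ`. Off a meagre set, a point of the hull of the whole image
lies in the hulls along a branch of cylinders, and the closures of their images shrink to the image
of that branch.
-/

open Topology Set Filter Function PiNat MeasureTheory
open scoped Pointwise

section Baire

variable {X : Type*} [TopologicalSpace X]

theorem isMeagre_diff_of_residualEq {s t : Set X} (h : s =ᵇ t) : IsMeagre (t \ s) :=
  (eventuallyEq_set.1 h).mono fun _ hx hx' => hx'.2 (hx.2 hx'.1)

theorem exists_baireMeasurableSet_hull [SecondCountableTopology X] (S : Set X) :
    ∃ E, S ⊆ E ∧ E ⊆ closure S ∧ BaireMeasurableSet E ∧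
      ∀ Z ⊆ E \ S, BaireMeasurableSet Z → IsMeagre Z := by
  obtain ⟨b, hbc, -, hb⟩ := TopologicalSpace.exists_countable_basis X
  set O := ⋃ W ∈ {W ∈ b | IsMeagre (W ∩ S)}, W
  have hO : IsOpen O := isOpen_biUnion fun W hW => hb.isOpen hW.1
  have hOS : IsMeagre (O ∩ S) := by
    rw [iUnion₂_inter]
    exact isMeagre_biUnion (hbc.mono (sep_subset _ _)) fun W hW => hW.2
  have hmax : ∀ u, IsOpen u → IsMeagre (u ∩ S) → u ⊆ O := by
    intro u hu huS x hx
    obtain ⟨W, hWb, hxW, hWu⟩ := hb.exists_subset_of_mem_open hx hu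
    exact mem_biUnion ⟨hWb, huS.mono (inter_subset_inter_left _ hWu)⟩ hxW
  refine ⟨S ∪ Oᶜ, subset_union_left, union_subset subset_closure ?_, ?_, ?_⟩
  · exact compl_subset_comm.1 <| hmax _ isClosed_closure.isOpen_compl <|
      IsMeagre.empty.mono fun x hx => hx.1 (subset_closure hx.2)
  · have hsplit : S ∪ Oᶜ = (O ∩ S) ∪ Oᶜ := by
      ext x; by_cases x ∈ O <;> simp [*]
    rw [hsplit]
    exact hOS.baireMeasurableSet.union hO.baireMeasurableSet.compl
  · intro Z hZ hZbm
    obtain ⟨u, hu, hZu⟩ := hZbm.residualEq_isOpen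
    have huS : u ∩ S ⊆ u \ Z := fun x hx => ⟨hx.1, fun hxZ => (hZ hxZ).2 hx.2⟩
    have huO : u ⊆ O := hmax u hu ((isMeagre_diff_of_residualEq hZu).mono huS)
    have hZ_sub : Z ⊆ Z \ u := fun x hxZ =>
      ⟨hxZ, fun hxu => ((hZ hxZ).1.resolve_left (hZ hxZ).2) (huO hxu)⟩
    exact (isMeagre_diff_of_residualEq hZu.symm).mono hZ_sub

end Baire

section Souslin

variable {E : ℕ → Type*} [∀ n, TopologicalSpace (E n)] [∀ n, DiscreteTopology (E n)]
  {X : Type*} [TopologicalSpace X]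

theorem PiNat.exists_cylinder_subset_of_mem_nhds {x : ∀ n, E n} {s : Set (∀ n, E n)}
    (hs : s ∈ 𝓝 x) : ∃ n, cylinder x n ⊆ s := by
  obtain ⟨_, ⟨y, n, rfl⟩, hx, hsub⟩ := (isTopologicalBasis_cylinders E).mem_nhds_iff.1 hs
  exact ⟨n, mem_cylinder_iff_eq.1 hx ▸ hsub⟩

theorem PiNat.eq_of_forall_mem_closure_image_cylinder [T2Space X] {φ : (∀ n, E n) → X}
    (hφ : Continuous φ) {x : X} {y : ∀ n, E n} (h : ∀ n, x ∈ closure (φ '' cylinder y n)) :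
    x = φ y := by
  by_contra hne
  obtain ⟨U, V, hU, hV, hxU, hyV, hUV⟩ := t2_separation hne
  obtain ⟨n, hn⟩ :=
    exists_cylinder_subset_of_mem_nhds (hφ.continuousAt.preimage_mem_nhds (hV.mem_nhds hyV))
  obtain ⟨_, hzU, z, hz, rfl⟩ := mem_closure_iff.1 (h n) U hU hxU
  exact disjoint_left.1 hUV hzU (hn hz)

variable [T2Space X] [SecondCountableTopology X]

theorem baireMeasurableSet_range_of_continuous {φ : (ℕ → ℕ) → X} (hφ : Continuous φ) :
    BaireMeasurableSet (range φ) := by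
  choose hull subset_hull hull_subset_closure baireMeasurableSet_hull isMeagre_of_subset_hull
    using exists_baireMeasurableSet_hull (X := X)
  -- `res` lists initial segments backwards, so the pieces `A (k :: l)` refine `A l`.
  set A : List ℕ → Set X := fun l => φ '' {y | res y l.length = l}
  set E : List ℕ → Set X := fun l => hull (A l)
  have hA_nil : A [] = range φ := by simp [A]
  have hA_cons : ∀ l, A l ⊆ ⋃ k, A (k :: l) := by
    rintro l _ ⟨y, hy, rfl⟩
    exact mem_iUnion.2 ⟨y l.length, y, by simpa [res_succ] using hy, rfl⟩
  set M := ⋃ l, E l \ ⋃ k, E (k :: l)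
  have hM : IsMeagre M := isMeagre_iUnion fun l =>
    isMeagre_of_subset_hull _ _
      (sdiff_subset_sdiff_right ((hA_cons l).trans (iUnion_mono fun _ => subset_hull _)))
      ((baireMeasurableSet_hull _).diff (.iUnion fun _ => baireMeasurableSet_hull _))
  have hEM : E [] \ A [] ⊆ M := by
    rintro x ⟨hx, hxA⟩
    by_contra hxM
    have step : ∀ l, x ∈ E l → ∃ k, x ∈ E (k :: l) := fun l hl => by
      by_contra! h
      exact hxM (mem_iUnion.2 ⟨l, hl, by simpa using h⟩)
    choose! k hk using step
    let L : ℕ → List ℕ := fun n => Nat.rec [] (fun _ l => k l :: l) n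
    let y : ℕ → ℕ := fun n => k (L n)
    have hres : ∀ n, res y n = L n := by
      intro n
      induction n with
      | zero => rfl
      | succ n ih => rw [res_succ, ih]
    have hmem : ∀ n, x ∈ E (L n) := by
      intro n
      induction n with
      | zero => exact hx
      | succ n ih => exact hk _ ih
    refine hxA (hA_nil ▸ ⟨y, (eq_of_forall_mem_closure_image_cylinder hφ fun n => ?_).symm⟩)
    have hcyl : A (L n) = φ '' cylinder y n := by
      simp only [A, cylinder_eq_res, ← hres n, res_length]
    exact hcyl ▸ hull_subset_closure _ (hmem n)
  rw [← hA_nil, ← sdiff_sdiff_cancel_left (subset_hull (A []))]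
  exact (baireMeasurableSet_hull _).diff (hM.mono hEM).baireMeasurableSet

theorem MeasureTheory.AnalyticSet.baireMeasurableSet {s : Set X} (hs : AnalyticSet s) :
    BaireMeasurableSet s := by
  rw [AnalyticSet] at hs
  rcases hs with rfl | ⟨φ, hφ, rfl⟩
  exacts [IsMeagre.empty.baireMeasurableSet, baireMeasurableSet_range_of_continuous hφ]

end Souslin

theorem IsMeagre.smul_set {α X : Type*} [Group α] [TopologicalSpace X] [MulAction α X]
    [ContinuousConstSMul α X] {s : Set X} (hs : IsMeagre s) (g : α) : IsMeagre (g • s) := by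
  rw [← preimage_smul_inv]
  exact hs.preimage_of_isOpenMap (continuous_const_smul _) (isOpenMap_smul _)

section Group

variable {G H : Type*} [Group G] [TopologicalSpace G] [IsTopologicalGroup G]
  [Group H] [TopologicalSpace H] [IsTopologicalGroup H]

theorem BaireMeasurableSet.div_mem_nhds_one [BaireSpace G] {A : Set G}
    (hA : BaireMeasurableSet A) (hA' : ¬IsMeagre A) : A / A ∈ 𝓝 1 := by
  obtain ⟨u, hu, hAu⟩ := hA.residualEq_isOpen
  have hu_meagre : IsMeagre (u \ A) := isMeagre_diff_of_residualEq hAu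
  obtain ⟨c, hc⟩ : u.Nonempty := by
    by_contra! h
    exact hA' (by simpa [h] using isMeagre_diff_of_residualEq hAu.symm)
  filter_upwards [hu.div_left.mem_nhds ⟨c, hc, c, hc, div_self' c⟩] with g hg
  have hne : (g • u ∩ u).Nonempty := by
    obtain ⟨a, ha, b, hb, rfl⟩ := hg
    exact smul_inter_nonempty_iff'.2 ⟨a, b, ⟨ha, hb⟩, rfl⟩
  have hAne : (g • A ∩ A).Nonempty := by
    refine nonempty_of_not_isMeagre fun h => not_isMeagre_of_isOpen ((hu.smul g).inter hu) hne
      (((h.union (hu_meagre.smul_set g)).union hu_meagre).mono ?_)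
    rintro x ⟨hxg, hx⟩
    rw [smul_set_sdiff]
    by_cases x ∈ A <;> by_cases x ∈ g • A <;> simp_all
  obtain ⟨a, b, ⟨ha, hb⟩, rfl⟩ := smul_inter_nonempty_iff'.1 hAne
  exact div_mem_div ha hb

theorem MonoidHom.not_isMeagre_image_of_mem_nhds [SecondCountableTopology G] [BaireSpace H]
    (f : G →* H) (hs : Surjective f) {W : Set G} (hW : W ∈ 𝓝 1) : ¬IsMeagre (f '' W) := by
  obtain ⟨t, htc, ht⟩ := TopologicalSpace.countable_cover_nhds (f := fun g : G => g • W)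
    fun g => by simpa using smul_mem_nhds_smul g hW
  intro h
  refine not_isMeagre_of_isOpen isOpen_univ univ_nonempty
    ((isMeagre_biUnion htc fun g _ => h.smul_set (f g)).mono ?_)
  rw [← hs.range_eq, ← image_univ, ← ht, image_iUnion₂]
  simp only [image_smul_distrib, subset_refl]

theorem MonoidHom.isOpenMap_of_baireMeasurableSet_image [SecondCountableTopology G]
    [BaireSpace H] (f : G →* H) (hs : Surjective f)
    (hf : ∀ V : Set G, IsOpen V → BaireMeasurableSet (f '' V)) : IsOpenMap f := by
  rw [IsTopologicalGroup.isOpenMap_iff_nhds_one]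
  intro U hU
  obtain ⟨V, hV, hVU⟩ := exists_nhds_split_inv hU
  have hfV := (hf _ isOpen_interior).div_mem_nhds_one
    (f.not_isMeagre_image_of_mem_nhds hs (interior_mem_nhds.2 hV))
  refine mem_of_superset hfV ?_
  rw [← image_div]
  rintro _ ⟨_, ⟨v, hv, w, hw, rfl⟩, rfl⟩
  exact hVU v (interior_subset hv) w (interior_subset hw)

end Group

theorem stmt_12 {G H : Type*} [Group G] [TopologicalSpace G] [IsTopologicalGroup G]
    [PolishSpace G] [Group H] [TopologicalSpace H] [IsTopologicalGroup H]
    [PolishSpace H] (f : G →* H) (hc : Continuous f)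
    (hs : Function.Surjective f) :
    IsHomeomorph (QuotientGroup.quotientKerEquivOfSurjective f hs) ∧ IsOpenMap f := by
  have hopen : IsOpenMap f := f.isOpenMap_of_baireMeasurableSet_image hs
    fun V hV => (hV.analyticSet_image hc).baireMeasurableSet
  set e := QuotientGroup.quotientKerEquivOfSurjective f hs
  have he : Continuous e := (QuotientGroup.isQuotientMap_mk f.ker).continuous_iff.2 hc
  refine ⟨isHomeomorph_iff_isQuotientMap_injective.2 ⟨?_, e.injective⟩, hopen⟩
  exact .of_comp QuotientGroup.continuous_mk he (hopen.isQuotientMap hc hs)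
end

section
/- Let G and H be topological abelian groups, let G₀ ⊆ G and H₀ ⊆ H be the closures of the identity, and let β : G → H be a continuous homomorphism mapping G₀ into H₀. If β is surjective, β restricted to G₀ surjects onto H₀, and the induced map of Hausdorff quotients β̄ : G/G₀ → H/H₀ is open, then β is an open map. -/
/-!
An open set `U ⊆ G` is a union of cosets of `closure {0}`, so `U + N = U` for every
`N ⊆ closure {0}`. If moreover `M ⊆ β '' N`, then `β '' U + M ⊆ β '' (U + N) = β '' U`, i.e.
`β '' U` is a union of cosets of `M`; it is therefore the preimage in `H` of its image in
`H ⧸ M`, which is the image of the open set `U` under the open maps `G → G ⧸ N → H ⧸ M`.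
-/

open scoped Pointwise

theorem IsOpen.add_mem_of_mem_closure_zero {G : Type*} [AddGroup G] [TopologicalSpace G]
    [IsTopologicalAddGroup G] {U : Set G} (hU : IsOpen U) {u x : G} (hu : u ∈ U)
    (hx : x ∈ closure ({0} : Set G)) : u + x ∈ U := by
  have hsat : U + closure ({0} : Set G) = U := by
    rw [hU.add_closure, Set.add_singleton]; simp only [add_zero, Set.image_id']
  exact hsat ▸ Set.add_mem_add hu hx

theorem AddMonoidHom.isOpenMap_of_isOpenMap_quotientMap {G H : Type*} [AddCommGroup G]
    [TopologicalSpace G] [IsTopologicalAddGroup G] [AddCommGroup H] [TopologicalSpace H]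
    [IsTopologicalAddGroup H] (β : G →+ H) {N : AddSubgroup G} {M : AddSubgroup H}
    (hN : (N : Set G) ⊆ closure {0}) (hM : M ≤ N.map β) (hNM : N ≤ M.comap β)
    (hopen : IsOpenMap (QuotientAddGroup.map N M β hNM)) : IsOpenMap β := by
  intro U hU
  have hsat : β '' U = QuotientAddGroup.mk' M ⁻¹'
      (QuotientAddGroup.map N M β hNM '' (QuotientAddGroup.mk' N '' U)) := by
    ext h
    constructor
    · rintro ⟨u, hu, rfl⟩
      exact ⟨QuotientAddGroup.mk' N u, ⟨u, hu, rfl⟩, rfl⟩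
    · rintro ⟨_, ⟨u, hu, rfl⟩, hquot⟩
      obtain ⟨_, hz, rfl⟩ := (QuotientAddGroup.mk'_eq_mk' M).mp hquot
      obtain ⟨g, hg, rfl⟩ := hM hz
      exact ⟨u + g, hU.add_mem_of_mem_closure_zero hu (hN hg), map_add β u g⟩
  rw [hsat]
  exact continuous_quot_mk.isOpen_preimage _ (hopen _ (QuotientAddGroup.isOpenMap_coe U hU))

theorem stmt_13_general {G H : Type*} [AddCommGroup G] [TopologicalSpace G]
    [IsTopologicalAddGroup G] [AddCommGroup H] [TopologicalSpace H]
    [IsTopologicalAddGroup H] (β : G →+ H)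
    (hmap : (⊥ : AddSubgroup G).topologicalClosure ≤
      ((⊥ : AddSubgroup H).topologicalClosure).comap β)
    (hsurj₀ : ∀ h ∈ (⊥ : AddSubgroup H).topologicalClosure,
      ∃ g ∈ (⊥ : AddSubgroup G).topologicalClosure, β g = h)
    (hopen : IsOpenMap (QuotientAddGroup.map
      ((⊥ : AddSubgroup G).topologicalClosure)
      ((⊥ : AddSubgroup H).topologicalClosure) β hmap)) :
    IsOpenMap β :=
  β.isOpenMap_of_isOpenMap_quotientMap (AddSubgroup.coe_topologicalClosure_bot G).subset
    hsurj₀ hmap hopen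

theorem stmt_13 {G H : Type*} [AddCommGroup G] [TopologicalSpace G]
    [IsTopologicalAddGroup G] [AddCommGroup H] [TopologicalSpace H]
    [IsTopologicalAddGroup H] (β : G →+ H) (hc : Continuous β)
    (hmap : (⊥ : AddSubgroup G).topologicalClosure ≤
      ((⊥ : AddSubgroup H).topologicalClosure).comap β)
    (hsurj : Function.Surjective β)
    (hsurj₀ : ∀ h ∈ (⊥ : AddSubgroup H).topologicalClosure,
      ∃ g ∈ (⊥ : AddSubgroup G).topologicalClosure, β g = h)
    (hopen : IsOpenMap (QuotientAddGroup.map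
      ((⊥ : AddSubgroup G).topologicalClosure)
      ((⊥ : AddSubgroup H).topologicalClosure) β hmap)) :
    IsOpenMap β :=
  stmt_13_general β hmap hsurj₀ hopen
end

section
/- Let G, H, K be Polish groups with K abelian, and let m : G × H → K be a map that is a homomorphism in each variable separately (biadditive) and separately continuous. Then m is jointly continuous. -/
/-!
Fix a neighbourhood `W` of `1` in `K` and a closed neighbourhood `W₁` of `1` with `W₁ * W₁ ⊆ W`.
For a countable basis `Vₙ` of `𝓝 1` in `H`, the closed sets `Aₙ = {g | m g (Vₙ) ⊆ W₁}` cover `G`,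
so by Baire one of them contains an open set around some `g₀`. Writing
`m g h = m g₀⁻¹ h * m (g₀ * g) h` shows that `m` maps a neighbourhood of `(1, 1)` into `W`, and
biadditivity propagates continuity at `(1, 1)` to every point.
-/

open Filter Topology

theorem exists_isOpen_nonempty_forall_mem_of_baireSpace {X Y Z : Type*}
    [TopologicalSpace X] [BaireSpace X] [Nonempty X] [TopologicalSpace Y] [TopologicalSpace Z]
    {F : X → Y → Z} {y : Y} [(𝓝 y).IsCountablyGenerated] (hF : ∀ y, Continuous (F · y))
    {W : Set Z} (hW : IsClosed W) (hmem : ∀ x, F x ⁻¹' W ∈ 𝓝 y) :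
    ∃ U : Set X, IsOpen U ∧ U.Nonempty ∧ ∃ V ∈ 𝓝 y, ∀ x ∈ U, ∀ y' ∈ V, F x y' ∈ W := by
  obtain ⟨V, hV⟩ := (𝓝 y).exists_antitone_basis
  let A : ℕ → Set X := fun n => {x | ∀ y' ∈ V n, F x y' ∈ W}
  have hA_closed : ∀ n, IsClosed (A n) := fun n => by
    simp only [A, Set.ofPred_forall]
    exact isClosed_biInter fun y' _ => hW.preimage (hF y')
  have hA_cover : ⋃ n, A n = Set.univ := Set.eq_univ_of_forall fun x => by
    obtain ⟨n, -, hn⟩ := hV.toHasBasis.mem_iff.mp (hmem x)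
    exact Set.mem_iUnion.mpr ⟨n, hn⟩
  obtain ⟨n, hn⟩ := nonempty_interior_of_iUnion_of_closed hA_closed hA_cover
  exact ⟨interior (A n), isOpen_interior, hn, V n, hV.mem n,
    fun x hx => interior_subset (s := A n) hx⟩

theorem continuousAt_one_one_of_baireSpace {G H K : Type*}
    [Group G] [TopologicalSpace G] [ContinuousMul G] [BaireSpace G]
    [One H] [TopologicalSpace H] [(𝓝 (1 : H)).IsCountablyGenerated]
    [Monoid K] [TopologicalSpace K] [ContinuousMul K] [RegularSpace K] {m : G → H → K}
    (hmul : ∀ g₁ g₂ h, m (g₁ * g₂) h = m g₁ h * m g₂ h) (hone : ∀ g, m g 1 = 1)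
    (hl : ∀ h, Continuous (m · h)) (hr : ∀ g, ContinuousAt (m g) 1) :
    ContinuousAt (fun p : G × H => m p.1 p.2) (1, 1) := by
  intro W hW
  change W ∈ 𝓝 (m 1 1) at hW
  rw [hone] at hW
  obtain ⟨V, hV, hVW⟩ := exists_nhds_one_split hW
  obtain ⟨W₁, hW₁, hW₁_closed, hW₁V⟩ := exists_mem_nhds_isClosed_subset hV
  have hpre : ∀ g, m g ⁻¹' W₁ ∈ 𝓝 (1 : H) := fun g => hr g (by rwa [hone])
  obtain ⟨U, hU_open, ⟨g₀, hg₀⟩, V', hV', hUV'⟩ :=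
    exists_isOpen_nonempty_forall_mem_of_baireSpace hl hW₁_closed hpre
  have hU : (g₀ * ·) ⁻¹' U ∈ 𝓝 (1 : G) :=
    (continuous_const_mul g₀).continuousAt.preimage_mem_nhds
      (hU_open.mem_nhds (by rwa [mul_one]))
  rw [mem_map]
  filter_upwards [prod_mem_nhds hU (inter_mem hV' (hpre g₀⁻¹))] with ⟨g, h⟩ ⟨hg, hh, hh₀⟩
  have hsplit : m g h = m g₀⁻¹ h * m (g₀ * g) h := by
    rw [← hmul, inv_mul_cancel_left]
  rw [Set.mem_preimage, hsplit]
  exact hVW _ (hW₁V hh₀) _ (hW₁V (hUV' _ hg h hh))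

theorem stmt_15_general {G H K : Type*} [Group G] [TopologicalSpace G] [IsTopologicalGroup G]
    [PolishSpace G] [Group H] [TopologicalSpace H] [IsTopologicalGroup H]
    [PolishSpace H] [CommGroup K] [TopologicalSpace K] [IsTopologicalGroup K]
    (m : G → H → K)
    (hG : ∀ g₁ g₂ h, m (g₁ * g₂) h = m g₁ h * m g₂ h)
    (hH : ∀ g h₁ h₂, m g (h₁ * h₂) = m g h₁ * m g h₂)
    (hcG : ∀ h, Continuous fun g => m g h)
    (hcH : ∀ g, Continuous fun h => m g h) :
    Continuous fun p : G × H => m p.1 p.2 := by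
  let f : G →* H →* K :=
    MonoidHom.mk' (fun g => MonoidHom.mk' (m g) (hH g)) fun g₁ g₂ => MonoidHom.ext (hG g₁ g₂)
  have hf : ContinuousAt (fun p : G × H => f p.1 p.2) (1, 1) :=
    continuousAt_one_one_of_baireSpace hG (fun g => map_one (f g))
      hcG fun g => (hcH g).continuousAt
  exact continuous_of_continuousAt_one₂ f hf (fun g => (hcH g).continuousAt)
    fun h => (hcG h).continuousAt

theorem stmt_15 {G H K : Type*} [Group G] [TopologicalSpace G] [IsTopologicalGroup G]
    [PolishSpace G] [Group H] [TopologicalSpace H] [IsTopologicalGroup H]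
    [PolishSpace H] [CommGroup K] [TopologicalSpace K] [IsTopologicalGroup K]
    [PolishSpace K] (m : G → H → K)
    (hG : ∀ g₁ g₂ h, m (g₁ * g₂) h = m g₁ h * m g₂ h)
    (hH : ∀ g h₁ h₂, m g (h₁ * h₂) = m g h₁ * m g h₂)
    (hcG : ∀ h, Continuous fun g => m g h)
    (hcH : ∀ g, Continuous fun h => m g h) :
    Continuous fun p : G × H => m p.1 p.2 :=
  stmt_15_general m hG hH hcG hcH
end
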